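/- arXiv:1501.04329 — 10 statements merged into one kernel-verified Lean document; each statement's English description precedes it below -/
import Mathlib

section
/- Let (R, m) be a commutative Artinian local ring with maximal ideal m, let n be a positive integer, and let I be a nonzero principal ideal of R such that I ⊆ m^(n-1) and I ⊄ m^n. Then every ideal of R properly contained in I is contained in I ∩ m^n; consequently the set of ideals of R contained in I is exactly the set of ideals contained in I ∩ m^n together with I itself, so |𝕀(I)| = |𝕀(I ∩ m^n)| + 1. -/
open IsLocalRing

/-! An ideal `J` strictly inside a principal ideal `(a)` of a local ring lies in `m · (a)`:
writing `x = r a` for `x ∈ J`, the coefficient `r` cannot be a unit, since otherwise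
`a ∈ J`. Hence `J ≤ m · m^(n-1) = m^n`, so `I ⊓ m^n` is the unique ideal covered by `I`. -/

theorem Set.Iio_eq_Iic_of_forall_lt_le {α : Type*} [Preorder α] {a b : α} (hba : b < a)
    (h : ∀ x < a, x ≤ b) : Set.Iio a = Set.Iic b :=
  Set.ext fun x => ⟨h x, fun hx => lt_of_le_of_lt hx hba⟩

theorem Ideal.le_maximalIdeal_mul_of_lt {R : Type*} [CommRing R] [IsLocalRing R]
    {I J : Ideal R} (hI : I.IsPrincipal) (hJ : J < I) : J ≤ maximalIdeal R * I := by
  rw [← Ideal.span_singleton_generator I] at hJ ⊢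
  intro x hx
  obtain ⟨r, rfl⟩ := Ideal.mem_span_singleton'.mp (hJ.le hx)
  have hr : r ∈ maximalIdeal R := by
    rw [mem_maximalIdeal, mem_nonunits_iff]
    intro hr
    exact hJ.not_ge (Ideal.span_singleton_le_iff_mem J |>.mpr
      ((Ideal.unit_mul_mem_iff_mem J hr).mp hx))
  exact Ideal.mul_mem_mul hr (Ideal.mem_span_singleton_self _)

theorem stmt_0_general (R : Type*) [CommRing R] [IsLocalRing R]
    (n : ℕ) (hn : 1 ≤ n) (I : Ideal R) (hIprin : I.IsPrincipal)
    (hIle : I ≤ maximalIdeal R ^ (n - 1)) (hInle : ¬ I ≤ maximalIdeal R ^ n) :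
    (∀ J : Ideal R, J < I → J ≤ I ⊓ maximalIdeal R ^ n) ∧
    {J : Ideal R | J ≤ I} = {J : Ideal R | J ≤ I ⊓ maximalIdeal R ^ n} ∪ {I} ∧
    Cardinal.mk {J : Ideal R | J ≤ I} =
      Cardinal.mk {J : Ideal R | J ≤ I ⊓ maximalIdeal R ^ n} + 1 := by
  have key (J : Ideal R) (hJ : J < I) : J ≤ I ⊓ maximalIdeal R ^ n := by
    refine le_inf hJ.le ?_
    calc J ≤ maximalIdeal R * I := Ideal.le_maximalIdeal_mul_of_lt hIprin hJ
      _ ≤ maximalIdeal R * maximalIdeal R ^ (n - 1) := Ideal.mul_mono_right hIle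
      _ = maximalIdeal R ^ n := by rw [← pow_succ', Nat.sub_add_cancel hn]
  have hlt : I ⊓ maximalIdeal R ^ n < I := inf_lt_left.mpr hInle
  have hIio : Set.Iio I = Set.Iic (I ⊓ maximalIdeal R ^ n) :=
    Set.Iio_eq_Iic_of_forall_lt_le hlt key
  have hIic : Set.Iic I = insert I (Set.Iic (I ⊓ maximalIdeal R ^ n)) := by
    rw [← Set.Iio_insert, hIio]
  refine ⟨key, ?_, ?_⟩
  · exact hIic.trans (Set.insert_eq _ _ |>.trans (Set.union_comm _ _))
  · change Cardinal.mk (Set.Iic I) = Cardinal.mk (Set.Iic _) + 1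
    rw [hIic]
    exact Cardinal.mk_insert hlt.not_ge

/-- Let (R, m) be a commutative Artinian local ring, n a positive integer,
and I a nonzero principal ideal with I ⊆ m^(n-1) and I ⊄ m^n. Then every ideal properly
contained in I is contained in I ∩ m^n; consequently 𝕀(I) = 𝕀(I ∩ m^n) ∪ {I} and
|𝕀(I)| = |𝕀(I ∩ m^n)| + 1. -/
theorem stmt_0 (R : Type*) [CommRing R] [IsArtinianRing R] [IsLocalRing R]
    (n : ℕ) (hn : 1 ≤ n) (I : Ideal R) (hI0 : I ≠ ⊥) (hIprin : I.IsPrincipal)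
    (hIle : I ≤ maximalIdeal R ^ (n - 1)) (hInle : ¬ I ≤ maximalIdeal R ^ n) :
    (∀ J : Ideal R, J < I → J ≤ I ⊓ maximalIdeal R ^ n) ∧
    {J : Ideal R | J ≤ I} = {J : Ideal R | J ≤ I ⊓ maximalIdeal R ^ n} ∪ {I} ∧
    Cardinal.mk {J : Ideal R | J ≤ I} =
      Cardinal.mk {J : Ideal R | J ≤ I ⊓ maximalIdeal R ^ n} + 1 :=
  stmt_0_general R n hn I hIprin hIle hInle
end

section
/- Let (R, m) be a commutative Noetherian local ring with maximal ideal m, and let x ∈ R be such that the principal ideal Rx contains exactly three ideals of R (i.e., |𝕀(Rx)| = 3, so Rx has exactly one nonzero proper sub-ideal). Then m² ⊆ Ann(x). -/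
/-!
Nakayama's lemma gives `mI < I` for the nonzero principal ideal `I = Rx`, so `0 < mI < I` are
the three ideals below `I`. Hence `mI` is a minimal nonzero ideal, thus principal, and Nakayama
applied once more forces `m (mI) = 0`.
-/

open IsLocalRing

theorem isAtom_of_card_Iic_eq_three {α : Type*} [PartialOrder α] [OrderBot α] {a b : α}
    (hcard : Nat.card (Set.Iic b) = 3) (ha : ⊥ < a) (hab : a < b) : IsAtom a := by
  have hfin : (Set.Iic b).Finite :=
    have : Finite (Set.Iic b) := Nat.finite_of_card_ne_zero (by omega)
    Set.toFinite _
  have hsub : ({⊥, a, b} : Set α) ⊆ Set.Iic b := by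
    rintro c (rfl | rfl | rfl)
    exacts [bot_le, hab.le, le_rfl]
  have hthree : ({⊥, a, b} : Set α).ncard = 3 :=
    Set.ncard_eq_three.mpr ⟨_, _, _, ha.ne, (ha.trans hab).ne, hab.ne, rfl⟩
  have hIic : ({⊥, a, b} : Set α) = Set.Iic b :=
    Set.eq_of_subset_of_ncard_le hsub (by rw [hthree, ← Nat.card_coe_set_eq, hcard]) hfin
  refine ⟨ha.ne', fun c hca => ?_⟩
  have hc : c ∈ ({⊥, a, b} : Set α) := hIic ▸ (hca.le.trans hab.le)
  rcases hc with rfl | rfl | rfl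
  · rfl
  · exact absurd hca (lt_irrefl _)
  · exact absurd (hca.trans hab) (lt_irrefl _)

theorem Submodule.fg_of_isAtom {R M : Type*} [Semiring R] [AddCommMonoid M] [Module R M]
    {N : Submodule R M} (hN : IsAtom N) : N.FG := by
  obtain ⟨y, hyN, hy0⟩ := Submodule.exists_mem_ne_zero_of_ne_bot hN.ne_bot
  have hspan : R ∙ y = N := by
    refine (hN.le_iff.mp ((Submodule.span_singleton_le_iff_mem y N).mpr hyN)).resolve_left ?_
    rwa [Submodule.span_singleton_eq_bot]
  exact hspan ▸ Submodule.fg_span_singleton y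

section LocalRing

variable {R : Type*} [CommRing R] [IsLocalRing R]

theorem IsLocalRing.maximalIdeal_mul_lt_self {J : Ideal R} (hfg : J.FG) (hJ : J ≠ ⊥) :
    maximalIdeal R * J < J := by
  refine lt_of_le_of_ne Ideal.mul_le_right ?_
  intro h
  refine hJ (Submodule.eq_bot_of_le_smul_of_le_jacobson_bot _ _ hfg ?_
    (maximalIdeal_le_jacobson ⊥))
  rw [Ideal.smul_eq_mul, h]

theorem IsLocalRing.maximalIdeal_mul_eq_bot_of_isAtom {J : Ideal R} (hJ : IsAtom J) :
    maximalIdeal R * J = ⊥ :=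
  hJ.lt_iff.mp (maximalIdeal_mul_lt_self (Submodule.fg_of_isAtom hJ) hJ.ne_bot)

end LocalRing

theorem stmt_1_general (R : Type*) [CommRing R] [IsLocalRing R]
    (x : R) (h3 : Nat.card {J : Ideal R | J ≤ Ideal.span {x}} = 3) :
    ∀ a ∈ maximalIdeal R ^ 2, a * x = 0 := by
  set m := maximalIdeal R
  set I := Ideal.span {x}
  suffices hbot : m * (m * I) = ⊥ by
    intro a ha
    have hax : a * x ∈ m ^ 2 * I := Ideal.mul_mem_mul ha (Ideal.mem_span_singleton_self x)
    rwa [pow_two, mul_assoc, hbot, Ideal.mem_bot] at hax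
  by_cases hmI : m * I = ⊥
  · rw [hmI, Ideal.mul_bot]
  have hmI_lt : m * I < I := maximalIdeal_mul_lt_self (Submodule.fg_span_singleton x)
    fun hI => hmI (by rw [hI, Ideal.mul_bot])
  exact maximalIdeal_mul_eq_bot_of_isAtom
    (isAtom_of_card_Iic_eq_three h3 (bot_lt_iff_ne_bot.mpr hmI) hmI_lt)

/-- Let (R, m) be a commutative Noetherian local ring and x ∈ R such that
the principal ideal Rx contains exactly three ideals of R.  Then m² ⊆ Ann(x). -/
theorem stmt_1 (R : Type*) [CommRing R] [IsNoetherianRing R] [IsLocalRing R]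
    (x : R) (h3 : Nat.card {J : Ideal R | J ≤ Ideal.span {x}} = 3) :
    ∀ a ∈ maximalIdeal R ^ 2, a * x = 0 :=
  stmt_1_general R x h3
end

section
/- Let R be a commutative ring and let z ∈ R. If only finitely many ideals of R are contained in the principal ideal Rz and only finitely many ideals of R are contained in Ann(z), then R is an Artinian ring. -/
/-! The map `R → R z`, `a ↦ a z`, is onto with kernel `Ann(z)`, so `R` is an extension of the
Artinian module `R z` by the Artinian module `Ann(z)`; a submodule is Artinian as soon as
it has only finitely many submodules. -/

namespace Submodule

theorem isArtinian_of_finite_setOf_le {R M : Type*} [Ring R] [AddCommGroup M] [Module R M]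
    (p : Submodule R M) (h : {q : Submodule R M | q ≤ p}.Finite) : IsArtinian R p :=
  have : Finite {q : Submodule R M // q ≤ p} := h.to_subtype
  have : Finite (Submodule R p) := .of_equiv _ (MapSubtype.orderIso p).symm.toEquiv
  inferInstance

variable {R M : Type*} [CommRing R] [AddCommGroup M] [Module R M]

theorem ker_toSpanSingleton_eq_colon_bot (m : M) :
    LinearMap.ker (LinearMap.toSpanSingleton R M m) = (⊥ : Submodule R M).colon (R ∙ m) := by
  ext a
  rw [LinearMap.mem_ker, mem_colon_span_singleton, LinearMap.toSpanSingleton_apply, mem_bot]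

theorem isArtinianRing_of_isArtinian_span_singleton_of_isArtinian_colon_bot (m : M)
    [IsArtinian R (R ∙ m)] [IsArtinian R ((⊥ : Submodule R M).colon (R ∙ m))] :
    IsArtinianRing R :=
  have : IsArtinian R (LinearMap.range (LinearMap.toSpanSingleton R M m)) := by
    rwa [← LinearMap.span_singleton_eq_range]
  isArtinian_of_range_eq_ker (colon ⊥ (R ∙ m)).subtype
    (LinearMap.toSpanSingleton R M m).rangeRestrict
    (by rw [range_subtype, LinearMap.ker_rangeRestrict, ker_toSpanSingleton_eq_colon_bot])

end Submodule

/-- Let R be a commutative ring and z ∈ R.  If only finitely many ideals of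
R are contained in Rz and only finitely many ideals of R are contained in
Ann(z) = {a ∈ R : a·z = 0}, then R is Artinian. -/
theorem stmt_5 (R : Type*) [CommRing R] (z : R)
    (h1 : {I : Ideal R | I ≤ Ideal.span {z}}.Finite)
    (h2 : {I : Ideal R | I ≤ Submodule.colon ⊥ ((Ideal.span {z} : Ideal R) : Set R)}.Finite) :
    IsArtinianRing R :=
  have := Submodule.isArtinian_of_finite_setOf_le _ h1
  have := Submodule.isArtinian_of_finite_setOf_le _ h2
  Submodule.isArtinianRing_of_isArtinian_span_singleton_of_isArtinian_colon_bot z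
end

section
/- Let (R, m) be a commutative Artinian local ring with maximal ideal m, and let t be a positive integer with m^t ≠ (0) and m^(t+1) = (0). If the R/m-vector space Ann(m) has dimension 1, then Ann(m) = m^t and m^t is the unique minimal nonzero ideal of R; that is, every nonzero ideal of R contains m^t. -/
/-!
Since `m` kills `Ann(m)`, the `R`-submodules of `Ann(m)` are its `R/m`-subspaces, so dimension one
makes `Ann(m)` a simple module, i.e. an atom of the lattice of ideals. This atom contains
`m^t ≠ 0` because `m^(t+1) = 0`, hence equals it. A nonzero ideal `I` meets `Ann(m)`
nontrivially (`I·m^k` for the largest `k` with `I·m^k ≠ 0` lies in both), so it contains the atom.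
-/

open IsLocalRing

theorem isSimpleModule_of_finrank_quotient_smul_top_eq_one {R M : Type*} [CommRing R]
    [AddCommGroup M] [Module R M] {I : Ideal R} [I.IsMaximal]
    (hM : I • (⊤ : Submodule R M) = ⊥)
    (h : Module.finrank (R ⧸ I) (M ⧸ I • (⊤ : Submodule R M)) = 1) : IsSimpleModule R M := by
  let := Ideal.Quotient.field I
  have := isSimpleModule_iff_finrank_eq_one.mpr h
  have := (isSimpleModule_iff_isSimpleModule_of_algebraMap_surjective (R := R)
    Ideal.Quotient.mk_surjective).mpr this
  exact IsSimpleModule.congr (Submodule.quotEquivOfEqBot _ hM).symm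

namespace Ideal

variable {R : Type*} [CommRing R]

theorem le_bot_colon_iff {I J : Ideal R} : I ≤ (⊥ : Ideal R).colon J ↔ I * J = ⊥ := by
  rw [Submodule.bot_colon, Submodule.le_annihilator_iff, smul_eq_mul]

theorem smul_top_bot_colon_eq_bot (J : Ideal R) :
    J • (⊤ : Submodule R ((⊥ : Ideal R).colon J)) = ⊥ := by
  rw [← Submodule.le_annihilator_iff]
  intro r hr
  refine Submodule.mem_annihilator.mpr fun a _ ↦ Subtype.ext ?_
  simpa [mul_comm] using Submodule.mem_colon.mp a.2 r hr

theorem inf_bot_colon_ne_bot {J : Ideal R} :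
    ∀ {n : ℕ} {I : Ideal R}, I ≠ ⊥ → I * J ^ n = ⊥ → I ⊓ (⊥ : Ideal R).colon J ≠ ⊥
  | 0, I, hI, h => by simp_all
  | n + 1, I, hI, h => by
    by_cases hIJ : I * J = ⊥
    · rwa [inf_eq_left.mpr (le_bot_colon_iff.mpr hIJ)]
    · refine ne_bot_of_le_ne_bot (inf_bot_colon_ne_bot (n := n) hIJ ?_)
        (inf_le_inf_right _ mul_le_left)
      rwa [mul_assoc, ← pow_succ']

end Ideal

theorem stmt_6_general (R : Type*) [CommRing R] [IsLocalRing R]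
    (t : ℕ) (ht0 : maximalIdeal R ^ t ≠ ⊥)
    (ht1 : maximalIdeal R ^ (t + 1) = ⊥)
    (hdim : Module.finrank (R ⧸ maximalIdeal R)
      ((↥(Submodule.colon (⊥ : Ideal R) (maximalIdeal R))) ⧸
        (maximalIdeal R •
          (⊤ : Submodule R ↥(Submodule.colon (⊥ : Ideal R) (maximalIdeal R))))) = 1) :
    Submodule.colon (⊥ : Ideal R) (maximalIdeal R) = maximalIdeal R ^ t ∧
      ∀ I : Ideal R, I ≠ ⊥ → maximalIdeal R ^ t ≤ I := by
  have hsocle : IsAtom ((⊥ : Ideal R).colon (maximalIdeal R)) :=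
    isSimpleModule_iff_isAtom.mp <| isSimpleModule_of_finrank_quotient_smul_top_eq_one
      (Ideal.smul_top_bot_colon_eq_bot _) hdim
  have hpow_le : maximalIdeal R ^ t ≤ (⊥ : Ideal R).colon (maximalIdeal R) :=
    Ideal.le_bot_colon_iff.mpr (by rwa [← pow_succ])
  have hsocle_eq := ((hsocle.le_iff.mp hpow_le).resolve_left ht0).symm
  refine ⟨hsocle_eq, fun I hI ↦ ?_⟩
  have hI_socle : I ⊓ (⊥ : Ideal R).colon (maximalIdeal R) ≠ ⊥ :=
    Ideal.inf_bot_colon_ne_bot (n := t + 1) hI (by rw [ht1, Ideal.mul_bot])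
  rw [← hsocle_eq, ← inf_eq_right]
  exact (hsocle.le_iff.mp inf_le_right).resolve_left hI_socle

/-- Let (R, m) be a commutative Artinian local ring, t a positive integer
with m^t ≠ (0) and m^(t+1) = (0).  If the R/m-vector space Ann(m) has dimension 1
(Ann(m) is annihilated by m, so Ann(m) = Ann(m)/m·Ann(m) is an R/m-vector space), then
Ann(m) = m^t and m^t is the unique minimal nonzero ideal of R. -/
theorem stmt_6 (R : Type*) [CommRing R] [IsArtinianRing R] [IsLocalRing R]
    (t : ℕ) (ht : 1 ≤ t) (ht0 : maximalIdeal R ^ t ≠ ⊥)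
    (ht1 : maximalIdeal R ^ (t + 1) = ⊥)
    (hdim : Module.finrank (R ⧸ maximalIdeal R)
      ((↥(Submodule.colon (⊥ : Ideal R) (maximalIdeal R))) ⧸
        (maximalIdeal R •
          (⊤ : Submodule R ↥(Submodule.colon (⊥ : Ideal R) (maximalIdeal R))))) = 1) :
    Submodule.colon (⊥ : Ideal R) (maximalIdeal R) = maximalIdeal R ^ t ∧
      ∀ I : Ideal R, I ≠ ⊥ → maximalIdeal R ^ t ≤ I :=
  stmt_6_general R t ht0 ht1 hdim
end

section
/- Let (R, m) be a commutative Artinian local ring with maximal ideal m such that m³ = (0), m² ≠ (0), the R/m-vector space m/m² has dimension 2, and the R/m-vector space Ann(m) has dimension 1. Then every nonzero proper ideal of R other than m is a principal ideal. -/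
/-!
Since `m³ = 0`, `m² ⊆ Ann(m)`, and a one-dimensional `Ann(m)` is generated by any of its nonzero
elements; hence `m² = Ann(m)` and every nonzero ideal inside `m²` equals it and is principal.
An ideal `I ⊊ m` not inside `m²` contains some `x ∉ m²`; then `m x` is a nonzero ideal inside
`Ann(m)`, so `m² = m x ⊆ (x)`. As `m/m²` is two-dimensional and `I ≠ m`, Nakayama forces the image
of `I` in `m/m²` to be the line through `x`, so `I ⊆ (x) + m² = (x)`.
-/

open IsLocalRing Module Submodule

theorem Submodule.span_pair_eq_top_of_finrank_eq_two {K V : Type*} [DivisionRing K]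
    [AddCommGroup V] [Module K V] (h : finrank K V = 2) {v w : V} (hv : v ≠ 0)
    (hw : w ∉ K ∙ v) : span K {v, w} = ⊤ := by
  have hli : LinearIndependent K ![v, w] :=
    (LinearIndependent.pair_iff' hv).2 fun a ha => hw (ha ▸ mem_span_singleton.2 ⟨a, rfl⟩)
  rw [Set.pair_comm]
  simpa [Matrix.range_cons_cons_empty] using hli.span_eq_top_of_card_eq_finrank (by simp [h])

namespace IsLocalRing

variable {R : Type*} [CommRing R] [IsLocalRing R]

theorem eq_span_singleton_of_maximalIdeal_mul_eq_bot {J : Ideal R}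
    (hJ : maximalIdeal R * J = ⊥)
    (hdim : finrank (R ⧸ maximalIdeal R) (J ⧸ maximalIdeal R • (⊤ : Submodule R J)) = 1)
    {z : R} (hz : z ∈ J) (hz0 : z ≠ 0) : J = Ideal.span {z} := by
  let _ : Field (R ⧸ maximalIdeal R) := Ideal.Quotient.field _
  have hbot : maximalIdeal R • (⊤ : Submodule R J) = ⊥ :=
    eq_bot_iff.2 fun w hw => by
      rw [mem_smul_top_iff, Ideal.smul_eq_mul, hJ, mem_bot] at hw
      exact (mem_bot R).2 (Subtype.ext hw)
  have hz' : Submodule.Quotient.mk (⟨z, hz⟩ : J) ≠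
      (0 : J ⧸ maximalIdeal R • (⊤ : Submodule R J)) := by
    rw [Ne, Quotient.mk_eq_zero, hbot, mem_bot]
    exact fun h => hz0 (congrArg Subtype.val h)
  refine le_antisymm (fun a ha => ?_) ((Ideal.span_singleton_le_iff_mem J).2 hz)
  obtain ⟨c, hc⟩ := (finrank_eq_one_iff_of_nonzero' _ hz').1 hdim (Submodule.Quotient.mk ⟨a, ha⟩)
  obtain ⟨r, rfl⟩ := Ideal.Quotient.mk_surjective c
  rw [Module.Quotient.mk_smul_mk, Submodule.Quotient.eq, hbot, mem_bot, sub_eq_zero] at hc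
  exact Ideal.mem_span_singleton'.2 ⟨r, congrArg Subtype.val hc⟩

theorem eq_of_le_of_maximalIdeal_mul_eq_bot {I J : Ideal R}
    (hJ : maximalIdeal R * J = ⊥)
    (hdim : finrank (R ⧸ maximalIdeal R) (J ⧸ maximalIdeal R • (⊤ : Submodule R J)) = 1)
    (hIJ : I ≤ J) (hI : I ≠ ⊥) : I = J := by
  obtain ⟨z, hz, hz0⟩ := exists_mem_ne_zero_of_ne_bot hI
  have hJz := eq_span_singleton_of_maximalIdeal_mul_eq_bot hJ hdim (hIJ hz) hz0
  exact le_antisymm hIJ (hJz.trans_le ((Ideal.span_singleton_le_iff_mem I).2 hz))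

theorem sq_maximalIdeal_eq_annihilator
    (hdim : finrank (R ⧸ maximalIdeal R) ((maximalIdeal R).annihilator ⧸
      maximalIdeal R • (⊤ : Submodule R (maximalIdeal R).annihilator)) = 1) (h3 : maximalIdeal R ^ 3 = ⊥)
    (h2 : maximalIdeal R ^ 2 ≠ ⊥) : maximalIdeal R ^ 2 = (maximalIdeal R).annihilator :=
  eq_of_le_of_maximalIdeal_mul_eq_bot (mul_annihilator _) hdim
    (le_annihilator_iff.2 (by rw [Ideal.smul_eq_mul, ← pow_succ, h3])) h2

theorem sq_maximalIdeal_le_span_singleton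
    (hdim : finrank (R ⧸ maximalIdeal R) ((maximalIdeal R).annihilator ⧸
      maximalIdeal R • (⊤ : Submodule R (maximalIdeal R).annihilator)) = 1)
    (hsq : maximalIdeal R ^ 2 = (maximalIdeal R).annihilator) {x : R}
    (hx : x ∈ maximalIdeal R) (hx2 : x ∉ maximalIdeal R ^ 2) :
    maximalIdeal R ^ 2 ≤ Ideal.span {x} := by
  have hmx : maximalIdeal R * Ideal.span {x} = (maximalIdeal R).annihilator := by
    refine eq_of_le_of_maximalIdeal_mul_eq_bot (mul_annihilator _) hdim ?_ fun h => hx2 ?_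
    · rw [← hsq, sq]
      exact Ideal.mul_mono_right ((Ideal.span_singleton_le_iff_mem _).2 hx)
    · rw [hsq, ← Ideal.span_singleton_le_iff_mem, le_annihilator_iff, Ideal.smul_eq_mul,
        mul_comm, h]
  exact hsq.trans_le (hmx.symm.trans_le Ideal.mul_le_right)

theorem le_span_singleton_sup_sq_of_lt_maximalIdeal [IsNoetherianRing R]
    (hdim : finrank (ResidueField R) (CotangentSpace R) = 2) {I : Ideal R}
    (hI : I < maximalIdeal R) {x : R} (hx : x ∈ I) (hx2 : x ∉ maximalIdeal R ^ 2) :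
    I ≤ Ideal.span {x} ⊔ maximalIdeal R ^ 2 := by
  intro y hy
  by_contra hyx
  -- otherwise the images of `x` and `y` span `m/m²`, and Nakayama gives `m ≤ I`
  refine hI.not_ge fun w hw => ?_
  set x' : maximalIdeal R := ⟨x, hI.le hx⟩
  set y' : maximalIdeal R := ⟨y, hI.le hy⟩
  have hx' : (maximalIdeal R).toCotangent x' ≠ 0 := by rwa [Ne, Ideal.toCotangent_eq_zero]
  have hy' : (maximalIdeal R).toCotangent y' ∉
      ResidueField R ∙ (maximalIdeal R).toCotangent x' := by
    rw [mem_span_singleton]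
    rintro ⟨c, hc⟩
    obtain ⟨r, rfl⟩ := residue_surjective c
    rw [← ResidueField.algebraMap_eq, algebraMap_smul, ← map_smul, Ideal.toCotangent_eq] at hc
    refine hyx (?_ : y ∈ _)
    rw [show y = r * x - (r * x - y) by ring]
    exact sub_mem (mem_sup_left (Ideal.mul_mem_left _ r (Ideal.mem_span_singleton_self x)))
      (mem_sup_right hc)
  have htop := span_pair_eq_top_of_finrank_eq_two hdim hx' hy'
  rw [← Set.image_pair, CotangentSpace.span_image_eq_top_iff] at htop
  have hw' : (⟨w, hw⟩ : maximalIdeal R) ∈ Submodule.span R {x', y'} := by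
    rw [htop]
    exact Submodule.mem_top
  exact (span_le (p := comap (maximalIdeal R).subtype I)).2 (Set.pair_subset hx hy) hw'

end IsLocalRing

/-- Let (R, m) be a commutative Artinian local ring with m³ = (0),
m² ≠ (0), v.dim_{R/m} (m/m²) = 2 and v.dim_{R/m} Ann(m) = 1.  Then every nonzero proper
ideal of R other than m is principal. -/
theorem stmt_7 (R : Type*) [CommRing R] [IsArtinianRing R] [IsLocalRing R]
    (h3 : maximalIdeal R ^ 3 = ⊥) (h2 : maximalIdeal R ^ 2 ≠ ⊥)
    (hdim2 : Module.finrank (R ⧸ maximalIdeal R)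
      ((↥(maximalIdeal R)) ⧸
        (maximalIdeal R • (⊤ : Submodule R ↥(maximalIdeal R)))) = 2)
    (hdimann : Module.finrank (R ⧸ maximalIdeal R)
      ((↥(Submodule.colon (⊥ : Ideal R) (maximalIdeal R))) ⧸
        (maximalIdeal R •
          (⊤ : Submodule R ↥(Submodule.colon (⊥ : Ideal R) (maximalIdeal R))))) = 1) :
    ∀ I : Ideal R, I ≠ ⊥ → I ≠ ⊤ → I ≠ maximalIdeal R → I.IsPrincipal := by
  intro I hI0 hItop hIm
  rw [bot_colon] at hdimann
  have hsq := sq_maximalIdeal_eq_annihilator hdimann h3 h2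
  by_cases hI2 : I ≤ maximalIdeal R ^ 2
  · obtain ⟨z, hz, hz0⟩ := exists_mem_ne_zero_of_ne_bot hI0
    rw [hsq] at hI2
    exact ⟨z, (eq_of_le_of_maximalIdeal_mul_eq_bot (mul_annihilator _) hdimann hI2 hI0).trans
      (eq_span_singleton_of_maximalIdeal_mul_eq_bot (mul_annihilator _) hdimann (hI2 hz) hz0)⟩
  obtain ⟨x, hx, hx2⟩ := SetLike.not_le_iff_exists.1 hI2
  have hIm' : I < maximalIdeal R := lt_of_le_of_ne (le_maximalIdeal hItop) hIm
  have hsqx := sq_maximalIdeal_le_span_singleton hdimann hsq (hIm'.le hx) hx2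
  refine ⟨x, le_antisymm ?_ ((Ideal.span_singleton_le_iff_mem I).2 hx)⟩
  simpa [sup_eq_left.2 hsqx] using le_span_singleton_sup_sq_of_lt_maximalIdeal hdim2 hIm' hx hx2
end

section
/- Let (R, m) be a commutative Artinian local ring with maximal ideal m such that m³ = (0), m² ≠ (0), the R/m-vector space m/m² has dimension 2, and the R/m-vector space Ann(m) has dimension 1. Then for every nonzero proper ideal I of R with I ≠ m and I ≠ m², the ideals of R contained in I are exactly (0), m², and I; that is, 𝕀(I) = {(0), m², I}, so I contains exactly one nonzero proper sub-ideal, namely m². -/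
/-!
Since `m³ = 0`, we have `m² ⊆ Ann(m)`. As `m` is nilpotent, every nonzero ideal `J` contains
a nonzero element killed by `m`; the socle `Ann(m)` being one-dimensional, it is generated by
that element, so `m² ⊆ Ann(m) ⊆ J`. Ideals between `m²` and `m` correspond to subspaces of the
plane `m/m²`, and an ideal `I ⊊ m` gives a proper subspace, of dimension at most one: so a
nonzero ideal `J ⊆ I` is either `m²` or has the same (one-dimensional) image as `I`, that is,
`J = I`.
-/

open IsLocalRing

namespace Submodule

theorem eq_of_ne_bot_of_le_of_ne_top_of_finrank_eq_two {K V : Type*} [Field K] [AddCommGroup V]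
    [Module K V] (hV : Module.finrank K V = 2) {W₁ W₂ : Submodule K V} (h₁ : W₁ ≠ ⊥)
    (h₁₂ : W₁ ≤ W₂) (h₂ : W₂ ≠ ⊤) : W₁ = W₂ := by
  have : FiniteDimensional K V := .of_finrank_pos (by omega)
  have hW₁ : 1 ≤ Module.finrank K W₁ := Submodule.one_le_finrank_iff.mpr h₁
  have hW₂ : Module.finrank K W₂ < 2 := hV ▸ Submodule.finrank_lt h₂
  exact Submodule.eq_of_le_of_finrank_le h₁₂ (by omega)

theorem eq_of_ne_bot_of_le_of_ne_top_of_surjective {R K V : Type*} [CommRing R] [Field K]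
    [Algebra R K] [AddCommGroup V] [Module R V] [Module K V] [IsScalarTower R K V]
    (hsurj : Function.Surjective (algebraMap R K)) (hV : Module.finrank K V = 2)
    {N₁ N₂ : Submodule R V} (h₁ : N₁ ≠ ⊥) (h₁₂ : N₁ ≤ N₂) (h₂ : N₂ ≠ ⊤) : N₁ = N₂ := by
  let e := (orderIsoOfAlgebraMapSurjective (M := V) hsurj).symm
  exact e.injective <| eq_of_ne_bot_of_le_of_ne_top_of_finrank_eq_two hV
    (e.map_bot ▸ e.injective.ne h₁) (e.monotone h₁₂) (e.map_top ▸ e.injective.ne h₂)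

end Submodule

namespace Ideal

variable {R : Type*} [CommRing R]

theorem pow_le_colon_bot_of_pow_succ_eq_bot {I : Ideal R} {n : ℕ} (h : I ^ (n + 1) = ⊥) :
    I ^ n ≤ (⊥ : Ideal R).colon I := by
  intro x hx
  refine Submodule.mem_colon.mpr fun p hp => ?_
  rw [← h, pow_succ]
  exact mul_mem_mul hx hp

theorem exists_mul_ne_zero_mem_colon_bot {I : Ideal R} {n : ℕ} {x : R} (hx : x ≠ 0)
    (hn : ∀ a ∈ I ^ n, a * x = 0) : ∃ r, r * x ≠ 0 ∧ r * x ∈ (⊥ : Ideal R).colon I := by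
  induction n generalizing x with
  | zero => exact absurd (by simpa using hn 1 (by simp)) hx
  | succ n ih =>
    by_cases hxI : x ∈ (⊥ : Ideal R).colon I
    · exact ⟨1, by simpa using hx, by simpa using hxI⟩
    obtain ⟨p, hp, hpx⟩ : ∃ p ∈ I, p * x ≠ 0 := by
      rw [Submodule.mem_colon] at hxI
      push Not at hxI
      obtain ⟨p, hp, hpx⟩ := hxI
      exact ⟨p, hp, by simpa [mul_comm] using hpx⟩
    obtain ⟨r, hr⟩ := ih hpx fun a ha => by
      simpa [mul_assoc] using hn (a * p) (pow_succ I n ▸ mul_mem_mul ha hp)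
    exact ⟨r * p, by simpa [mul_assoc] using hr⟩

theorem colon_bot_le_span_singleton {m : Ideal R} [m.IsMaximal]
    (hdim : Module.finrank (R ⧸ m) ((⊥ : Ideal R).colon m ⧸
      (m • ⊤ : Submodule R ((⊥ : Ideal R).colon m))) = 1)
    {y : R} (hy : y ∈ (⊥ : Ideal R).colon m) (hy0 : y ≠ 0) :
    (⊥ : Ideal R).colon m ≤ span {y} := by
  let := Ideal.Quotient.field m
  have hsmul : (m • ⊤ : Submodule R ((⊥ : Ideal R).colon m)) = ⊥ := by
    refine eq_bot_iff.mpr <| Submodule.smul_le.mpr fun r hr a _ => ?_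
    have := Submodule.mem_colon.mp a.2 r hr
    simpa [Subtype.ext_iff, mul_comm] using this
  have hv : Submodule.Quotient.mk (p := (m • ⊤ : Submodule R ((⊥ : Ideal R).colon m)))
      ⟨y, hy⟩ ≠ 0 := by
    simpa [hsmul] using hy0
  intro a ha
  obtain ⟨c, hc⟩ :=
    (finrank_eq_one_iff_of_nonzero' _ hv).mp hdim (Submodule.Quotient.mk ⟨a, ha⟩)
  obtain ⟨r, rfl⟩ := Ideal.Quotient.mk_surjective c
  rw [Module.Quotient.mk_smul_mk, Submodule.Quotient.eq, hsmul, Submodule.mem_bot,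
    sub_eq_zero, Subtype.ext_iff] at hc
  exact mem_span_singleton'.mpr ⟨r, hc⟩

theorem colon_bot_le_of_ne_bot {m : Ideal R} [m.IsMaximal] {n : ℕ} (hm : m ^ n = ⊥)
    (hdim : Module.finrank (R ⧸ m) ((⊥ : Ideal R).colon m ⧸
      (m • ⊤ : Submodule R ((⊥ : Ideal R).colon m))) = 1)
    {J : Ideal R} (hJ : J ≠ ⊥) : (⊥ : Ideal R).colon m ≤ J := by
  obtain ⟨x, hxJ, hx0⟩ := Submodule.exists_mem_ne_zero_of_ne_bot hJ
  obtain ⟨r, hr0, hr⟩ := exists_mul_ne_zero_mem_colon_bot (I := m) hx0 fun a ha => by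
    rw [hm, Submodule.mem_bot] at ha
    rw [ha, zero_mul]
  exact (colon_bot_le_span_singleton hdim hr hr0).trans
    ((span_singleton_le_iff_mem _).mpr (J.mul_mem_left r hxJ))

def cotangentImage (m I : Ideal R) : Submodule R m.Cotangent :=
  Submodule.map m.toCotangent (Submodule.comap (Submodule.subtype m) I)

theorem cotangentImage_mono (m : Ideal R) : Monotone m.cotangentImage := fun _ _ h =>
  Submodule.map_mono (Submodule.comap_mono h)

theorem cotangentImage_self (m : Ideal R) : m.cotangentImage m = ⊤ := by
  rw [cotangentImage, Submodule.comap_subtype_self, Submodule.map_top, toCotangent_range]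

theorem cotangentImage_sq (m : Ideal R) : m.cotangentImage (m ^ 2) = ⊥ := by
  refine eq_bot_iff.mpr (Submodule.map_le_iff_le_comap.mpr fun w hw => ?_)
  exact (m.toCotangent_eq_zero w).mpr hw

theorem le_of_cotangentImage_le {m I J : Ideal R} (hI : I ≤ m) (hJ : m ^ 2 ≤ J)
    (h : m.cotangentImage I ≤ m.cotangentImage J) : I ≤ J := by
  intro x hx
  obtain ⟨w, hwJ, hw⟩ := Submodule.mem_map.mp <| h <|
    Submodule.mem_map_of_mem (f := m.toCotangent) (r := ⟨x, hI hx⟩) hx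
  have hxw : x - w ∈ m ^ 2 := m.toCotangent_eq.mp hw.symm
  simpa using J.add_mem (hJ hxw) hwJ

theorem eq_of_sq_lt_of_le_of_lt {m I J : Ideal R} [m.IsMaximal]
    (hdim : Module.finrank (R ⧸ m) m.Cotangent = 2)
    (hJ : m ^ 2 < J) (hJI : J ≤ I) (hI : I < m) : J = I := by
  let := Ideal.Quotient.field m
  have hJ₀ : m.cotangentImage J ≠ ⊥ := fun h => hJ.not_ge <|
    le_of_cotangentImage_le (hJI.trans hI.le) le_rfl (h.trans (cotangentImage_sq m).symm).le
  have hI₀ : m.cotangentImage I ≠ ⊤ := fun h => hI.not_ge <|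
    le_of_cotangentImage_le le_rfl (hJ.le.trans hJI) (h.trans (cotangentImage_self m).symm).ge
  have h := Submodule.eq_of_ne_bot_of_le_of_ne_top_of_surjective Ideal.Quotient.mk_surjective hdim
    hJ₀ (m.cotangentImage_mono hJI) hI₀
  exact le_antisymm hJI (le_of_cotangentImage_le hI.le hJ.le h.ge)

end Ideal

theorem stmt_8_general (R : Type*) [CommRing R] [IsLocalRing R]
    (h3 : maximalIdeal R ^ 3 = ⊥)
    (hdim2 : Module.finrank (R ⧸ maximalIdeal R)
      ((↥(maximalIdeal R)) ⧸
        (maximalIdeal R • (⊤ : Submodule R ↥(maximalIdeal R)))) = 2)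
    (hdimann : Module.finrank (R ⧸ maximalIdeal R)
      ((↥(Submodule.colon (⊥ : Ideal R) (maximalIdeal R))) ⧸
        (maximalIdeal R •
          (⊤ : Submodule R ↥(Submodule.colon (⊥ : Ideal R) (maximalIdeal R))))) = 1) :
    ∀ I : Ideal R, I ≠ ⊥ → I ≠ ⊤ → I ≠ maximalIdeal R → I ≠ maximalIdeal R ^ 2 →
      {J : Ideal R | J ≤ I} = {⊥, maximalIdeal R ^ 2, I} := by
  intro I hI₀ hIT hIm _
  have hsq_le : ∀ J : Ideal R, J ≠ ⊥ → maximalIdeal R ^ 2 ≤ J := fun J hJ =>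
    (Ideal.pow_le_colon_bot_of_pow_succ_eq_bot h3).trans
      (Ideal.colon_bot_le_of_ne_bot h3 hdimann hJ)
  have hI : I < maximalIdeal R := lt_of_le_of_ne (le_maximalIdeal hIT) hIm
  ext J
  simp only [Set.mem_ofPred_eq, Set.mem_insert_iff, Set.mem_singleton_iff]
  refine ⟨fun hJI => ?_, ?_⟩
  · by_contra! ⟨hJ₀, hJsq, hJI'⟩
    exact hJI' (Ideal.eq_of_sq_lt_of_le_of_lt hdim2 ((hsq_le J hJ₀).lt_of_ne' hJsq) hJI hI)
  · rintro (rfl | rfl | rfl)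
    exacts [bot_le, hsq_le I hI₀, le_rfl]

/-- Let (R, m) be a commutative Artinian local ring with m³ = (0),
m² ≠ (0), v.dim_{R/m} (m/m²) = 2 and v.dim_{R/m} Ann(m) = 1.  Then for every nonzero
proper ideal I of R with I ≠ m and I ≠ m², the ideals of R contained in I are exactly
(0), m², and I. -/
theorem stmt_8 (R : Type*) [CommRing R] [IsArtinianRing R] [IsLocalRing R]
    (h3 : maximalIdeal R ^ 3 = ⊥) (h2 : maximalIdeal R ^ 2 ≠ ⊥)
    (hdim2 : Module.finrank (R ⧸ maximalIdeal R)
      ((↥(maximalIdeal R)) ⧸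
        (maximalIdeal R • (⊤ : Submodule R ↥(maximalIdeal R)))) = 2)
    (hdimann : Module.finrank (R ⧸ maximalIdeal R)
      ((↥(Submodule.colon (⊥ : Ideal R) (maximalIdeal R))) ⧸
        (maximalIdeal R •
          (⊤ : Submodule R ↥(Submodule.colon (⊥ : Ideal R) (maximalIdeal R))))) = 1) :
    ∀ I : Ideal R, I ≠ ⊥ → I ≠ ⊤ → I ≠ maximalIdeal R → I ≠ maximalIdeal R ^ 2 →
      {J : Ideal R | J ≤ I} = {⊥, maximalIdeal R ^ 2, I} :=
  stmt_8_general R h3 hdim2 hdimann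
end

section
/- Let (R, m) be a commutative Artinian local ring with maximal ideal m such that m³ = (0), m² ≠ (0), the R/m-vector space m/m² has dimension 2, and the R/m-vector space Ann(m) has dimension 1. Then every nonzero proper ideal I of R with I ≠ m² has degree at most 2 in the annihilating-ideal graph of R; that is, the set {J : J is a nonzero proper ideal of R, J ≠ I, and IJ = (0)} has at most two elements. -/
/-! Since `m³ = 0`, the socle `Ann(m)` contains `m²`; being one-dimensional, it has no nonzero
proper subideal, so it equals `m²`. Choose `x ∈ I` outside `m²`. An ideal `J` with `IJ = 0` lies
in `Ann(x)`. Either `J ⊆ m²`, and then `J = m²`, or some `y ∈ J` lies outside `m² = Ann(m)`, and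
then `0 ≠ m·y ⊆ m²` forces `m² = m·y ⊆ J`. In the second case `m² ⊊ J ⊆ Ann(x) ⊊ m`, and as
`m/m²` is two-dimensional, `J = Ann(x)`. -/

open IsLocalRing

namespace Submodule

variable {R M : Type*} [CommRing R] [AddCommGroup M] [Module R M]

noncomputable def toQuotSmulTop (I : Ideal R) (A P : Submodule R M) :
    Submodule (R ⧸ I) (A ⧸ I • (⊤ : Submodule R A)) :=
  (orderIsoOfAlgebraMapSurjective Ideal.Quotient.mk_surjective).symm
    ((P.comap A.subtype).map (I • ⊤ : Submodule R A).mkQ)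

variable {I : Ideal R} {A P Q : Submodule R M}

theorem toQuotSmulTop_le_toQuotSmulTop_iff (hPA : P ≤ A) (hQ : I • A ≤ Q) :
    toQuotSmulTop I A P ≤ toQuotSmulTop I A Q ↔ P ≤ Q := by
  have hQ' : (I • ⊤ : Submodule R A) ≤ Q.comap A.subtype := by
    rwa [← map_le_iff_le_comap, map_smul'', map_subtype_top]
  rw [toQuotSmulTop, toQuotSmulTop, OrderIso.le_iff_le,
    ← comap_le_comap_iff_of_surjective (mkQ_surjective _), comap_map_mkQ, comap_map_mkQ,
    sup_eq_right.2 hQ', sup_le_iff, and_iff_right hQ', ← map_le_iff_le_comap,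
    map_comap_subtype, inf_eq_right.2 hPA]

theorem toQuotSmulTop_strictMonoOn : StrictMonoOn (toQuotSmulTop I A) (Set.Icc (I • A) A) :=
  fun _ hP _ hQ hPQ => lt_of_le_not_ge ((toQuotSmulTop_le_toQuotSmulTop_iff hP.2 hQ.1).2 hPQ.le)
    fun h => hPQ.not_ge ((toQuotSmulTop_le_toQuotSmulTop_iff hQ.2 hP.1).1 h)

variable [I.IsMaximal]

theorem finrank_toQuotSmulTop_strictMonoOn
    [Module.Finite (R ⧸ I) (A ⧸ I • (⊤ : Submodule R A))] :
    StrictMonoOn (fun P => Module.finrank (R ⧸ I) (toQuotSmulTop I A P)) (Set.Icc (I • A) A) :=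
  let := Ideal.Quotient.field I
  fun _ hP _ hQ hPQ => finrank_lt_finrank_of_lt (toQuotSmulTop_strictMonoOn hP hQ hPQ)

theorem eq_of_finrank_quotient_smul_top_eq_one
    (h : Module.finrank (R ⧸ I) (A ⧸ I • (⊤ : Submodule R A)) = 1)
    (hP : I • A < P) (hPA : P ≤ A) : P = A := by
  let := Ideal.Quotient.field I
  have := Module.finite_of_finrank_eq_succ h
  by_contra hne
  have hmono := finrank_toQuotSmulTop_strictMonoOn (I := I) (A := A)
  have h₁ := hmono ⟨le_rfl, hP.le.trans hPA⟩ ⟨hP.le, hPA⟩ hP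
  have h₂ := hmono ⟨hP.le, hPA⟩ ⟨hP.le.trans hPA, le_rfl⟩ (lt_of_le_of_ne hPA hne)
  have h₃ := finrank_le (toQuotSmulTop I A A)
  simp only at h₁ h₂
  omega

theorem eq_of_finrank_quotient_smul_top_eq_two
    (h : Module.finrank (R ⧸ I) (A ⧸ I • (⊤ : Submodule R A)) = 2)
    (hP : I • A < P) (hPQ : P ≤ Q) (hQA : Q < A) : P = Q := by
  let := Ideal.Quotient.field I
  have := Module.finite_of_finrank_eq_succ h
  by_contra hne
  have hmono := finrank_toQuotSmulTop_strictMonoOn (I := I) (A := A)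
  have h₁ := hmono ⟨le_rfl, hP.le.trans (hPQ.trans hQA.le)⟩ ⟨hP.le, hPQ.trans hQA.le⟩ hP
  have h₂ := hmono ⟨hP.le, hPQ.trans hQA.le⟩ ⟨hP.le.trans hPQ, hQA.le⟩ (lt_of_le_of_ne hPQ hne)
  have h₃ := hmono ⟨hP.le.trans hPQ, hQA.le⟩ ⟨hP.le.trans (hPQ.trans hQA.le), le_rfl⟩ hQA
  have h₄ := finrank_le (toQuotSmulTop I A A)
  simp only at h₁ h₂ h₃
  omega

end Submodule

namespace Ideal

variable {R : Type*} [CommRing R] {I J : Ideal R}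

theorem le_annihilator_comm : I ≤ J.annihilator ↔ J ≤ I.annihilator := by
  rw [Submodule.le_annihilator_iff, Submodule.le_annihilator_iff, smul_eq_mul, smul_eq_mul,
    mul_comm]

theorem pow_le_annihilator_of_pow_succ_eq_bot {n : ℕ} (h : I ^ (n + 1) = ⊥) :
    I ^ n ≤ I.annihilator := by
  rwa [Submodule.le_annihilator_iff, smul_eq_mul, ← pow_succ]

variable [I.IsMaximal]

theorem eq_annihilator_of_le_of_ne_bot
    (h1 : Module.finrank (R ⧸ I) (I.annihilator ⧸ I • (⊤ : Submodule R I.annihilator)) = 1)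
    (hJ : J ≤ I.annihilator) (hJ0 : J ≠ ⊥) : J = I.annihilator :=
  Submodule.eq_of_finrank_quotient_smul_top_eq_one h1
    (by rwa [smul_eq_mul, Submodule.mul_annihilator, bot_lt_iff_ne_bot]) hJ

theorem annihilator_le_of_not_le_annihilator (h3 : I ^ 3 = ⊥)
    (h1 : Module.finrank (R ⧸ I) (I.annihilator ⧸ I • (⊤ : Submodule R I.annihilator)) = 1)
    (hJ : J ≤ I) (hJI : ¬ J ≤ I.annihilator) : I.annihilator ≤ J := by
  obtain ⟨y, hyJ, hy⟩ := SetLike.not_le_iff_exists.1 hJI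
  have hle : I * span {y} ≤ I.annihilator :=
    (mul_mono_right ((span_singleton_le_iff_mem _).2 (hJ hyJ))).trans
      (sq I ▸ pow_le_annihilator_of_pow_succ_eq_bot h3)
  have hne : I * span {y} ≠ ⊥ := fun h =>
    hy ((span_singleton_le_iff_mem _).1 (le_annihilator_comm.1 (Submodule.le_annihilator_iff.2 h)))
  rw [← eq_annihilator_of_le_of_ne_bot h1 hle hne]
  exact mul_le_right.trans ((span_singleton_le_iff_mem _).2 hyJ)

end Ideal

theorem IsLocalRing.annihilator_span_singleton_lt_maximalIdeal {R : Type*} [CommRing R]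
    [IsLocalRing R] {x : R} (hx : x ∉ (maximalIdeal R).annihilator) :
    (Ideal.span {x}).annihilator < maximalIdeal R := by
  refine lt_of_le_not_ge (le_maximalIdeal fun h => hx ?_) fun h => hx ?_
  · rw [Submodule.annihilator_eq_top_iff, Ideal.span_singleton_eq_bot] at h
    exact h ▸ zero_mem _
  · exact (Ideal.span_singleton_le_iff_mem _).1 (Ideal.le_annihilator_comm.1 h)

theorem stmt_9_general (R : Type*) [CommRing R] [IsLocalRing R]
    (h3 : maximalIdeal R ^ 3 = ⊥) (h2 : maximalIdeal R ^ 2 ≠ ⊥)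
    (hdim2 : Module.finrank (R ⧸ maximalIdeal R)
      ((↥(maximalIdeal R)) ⧸
        (maximalIdeal R • (⊤ : Submodule R ↥(maximalIdeal R)))) = 2)
    (hdimann : Module.finrank (R ⧸ maximalIdeal R)
      ((↥(Submodule.colon (⊥ : Ideal R) (maximalIdeal R))) ⧸
        (maximalIdeal R •
          (⊤ : Submodule R ↥(Submodule.colon (⊥ : Ideal R) (maximalIdeal R))))) = 1) :
    ∀ I : Ideal R, I ≠ ⊥ → I ≠ ⊤ → I ≠ maximalIdeal R ^ 2 →
      ∃ A B : Ideal R,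
        {J : Ideal R | J ≠ ⊥ ∧ J ≠ ⊤ ∧ J ≠ I ∧ I * J = ⊥} ⊆ {A, B} := by
  rw [Submodule.bot_colon] at hdimann
  intro I hI0 _ hIm2
  have hAnn : (maximalIdeal R).annihilator = maximalIdeal R ^ 2 :=
    (Ideal.eq_annihilator_of_le_of_ne_bot hdimann
      (Ideal.pow_le_annihilator_of_pow_succ_eq_bot h3) h2).symm
  obtain ⟨x, hxI, hx⟩ : ∃ x ∈ I, x ∉ (maximalIdeal R).annihilator := by
    by_contra! h
    exact hIm2 (hAnn ▸ Ideal.eq_annihilator_of_le_of_ne_bot hdimann h hI0)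
  refine ⟨maximalIdeal R ^ 2, (Ideal.span {x}).annihilator, ?_⟩
  rintro J ⟨hJ0, hJT, -, hIJ⟩
  by_cases hJ : J ≤ (maximalIdeal R).annihilator
  · exact .inl (hAnn ▸ Ideal.eq_annihilator_of_le_of_ne_bot hdimann hJ hJ0)
  have hJx : J ≤ (Ideal.span {x}).annihilator := by
    rw [Submodule.le_annihilator_iff, smul_eq_mul, mul_comm, ← le_bot_iff, ← hIJ]
    exact Ideal.mul_mono_left ((Ideal.span_singleton_le_iff_mem _).2 hxI)
  have hsqJ : maximalIdeal R • maximalIdeal R < J := by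
    rw [smul_eq_mul, ← sq, ← hAnn]
    exact lt_of_le_not_ge
      (Ideal.annihilator_le_of_not_le_annihilator h3 hdimann (le_maximalIdeal hJT) hJ) hJ
  exact .inr (Submodule.eq_of_finrank_quotient_smul_top_eq_two hdim2 hsqJ hJx
    (annihilator_span_singleton_lt_maximalIdeal hx))

/-- Let (R, m) be a commutative Artinian local ring with m³ = (0),
m² ≠ (0), v.dim_{R/m} (m/m²) = 2 and v.dim_{R/m} Ann(m) = 1.  Then every nonzero proper
ideal I ≠ m² has degree at most 2 in the annihilating-ideal graph of R: the set of
nonzero proper ideals J ≠ I with IJ = (0) has at most two elements. -/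
theorem stmt_9 (R : Type*) [CommRing R] [IsArtinianRing R] [IsLocalRing R]
    (h3 : maximalIdeal R ^ 3 = ⊥) (h2 : maximalIdeal R ^ 2 ≠ ⊥)
    (hdim2 : Module.finrank (R ⧸ maximalIdeal R)
      ((↥(maximalIdeal R)) ⧸
        (maximalIdeal R • (⊤ : Submodule R ↥(maximalIdeal R)))) = 2)
    (hdimann : Module.finrank (R ⧸ maximalIdeal R)
      ((↥(Submodule.colon (⊥ : Ideal R) (maximalIdeal R))) ⧸
        (maximalIdeal R •
          (⊤ : Submodule R ↥(Submodule.colon (⊥ : Ideal R) (maximalIdeal R))))) = 1) :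
    ∀ I : Ideal R, I ≠ ⊥ → I ≠ ⊤ → I ≠ maximalIdeal R ^ 2 →
      ∃ A B : Ideal R,
        {J : Ideal R | J ≠ ⊥ ∧ J ≠ ⊤ ∧ J ≠ I ∧ I * J = ⊥} ⊆ {A, B} :=
  stmt_9_general R h3 h2 hdim2 hdimann
end

section
/- Let (R, m) be a commutative local ring with maximal ideal m whose residue field R/m is infinite, and let k be a nonnegative integer such that the R/m-vector space m^k/m^(k+1) has dimension at least 2. Then there are infinitely many ideals J of R with m^(k+1) ⊆ J ⊆ m^k; in particular, the set 𝕀(m^k) of ideals of R contained in m^k is infinite. -/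
/-!
Over an infinite field a space `V` of dimension at least two contains the pairwise distinct lines
`span {x + c • y}`, `c ∈ K`, for `x, y` independent. Ideals between `m ^ (k + 1) = m • m ^ k`
and `m ^ k` are the preimages of the `R`-submodules of `m ^ k / m • m ^ k`, and these are
exactly its `R / m`-subspaces.
-/

open IsLocalRing

theorem LinearIndependent.injective_span_add_smul {R M : Type*} [CommRing R] [AddCommGroup M]
    [Module R M] {x y : M} (h : LinearIndependent R ![x, y]) :
    Function.Injective fun c : R ↦ Submodule.span R {x + c • y} := by
  intro c d (hcd : Submodule.span R {x + c • y} = Submodule.span R {x + d • y})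
  have hmem : x + c • y ∈ Submodule.span R {x + d • y} :=
    hcd ▸ Submodule.mem_span_singleton_self (x + c • y)
  obtain ⟨a, ha⟩ := Submodule.mem_span_singleton.mp hmem
  obtain ⟨ha1, hc⟩ := h.eq_of_pair (s := a) (t := a * d) (s' := 1) (t' := c)
    (by rw [one_smul, ← ha, smul_add, smul_smul])
  rw [← hc, ha1, one_mul]

theorem Submodule.infinite_of_two_le_rank {R M : Type*} [CommRing R] [Infinite R]
    [AddCommGroup M] [Module R M] (h : 2 ≤ Module.rank R M) : Infinite (Submodule R M) := by
  obtain ⟨v, hv⟩ := exists_linearIndependent_of_le_rank (n := 2) (by exact_mod_cast h)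
  have hpair : LinearIndependent R ![v 0, v 1] := by
    convert hv
    ext i; fin_cases i <;> rfl
  exact Infinite.of_injective _ hpair.injective_span_add_smul

theorem Submodule.infinite_Icc_map_subtype {R M : Type*} [Ring R] [AddCommGroup M] [Module R M]
    (P : Submodule R M) (N : Submodule R P) [Infinite (Submodule R (P ⧸ N))] :
    (Set.Icc (N.map P.subtype) P).Infinite := by
  refine Set.infinite_of_injective_forall_mem
    (f := fun S : Submodule R (P ⧸ N) ↦ (S.comap N.mkQ).map P.subtype)
    ((map_injective_of_injective P.injective_subtype).comp
      (comap_injective_of_surjective N.mkQ_surjective)) fun S ↦ ⟨?_, map_subtype_le P _⟩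
  exact map_mono fun x hx ↦ by simp [(Quotient.mk_eq_zero N).mpr hx]

theorem Submodule.map_subtype_smul_top {R M : Type*} [CommRing R] [AddCommGroup M] [Module R M]
    (I : Ideal R) (P : Submodule R M) : (I • ⊤ : Submodule R P).map P.subtype = I • P := by
  rw [map_smul'', map_top, range_subtype]

/-- Let (R, m) be a commutative local ring with infinite residue field
R/m, and k a nonnegative integer with v.dim_{R/m} (m^k/m^(k+1)) ≥ 2.  Then there are
infinitely many ideals J of R with m^(k+1) ⊆ J ⊆ m^k; in particular the set of ideals
of R contained in m^k is infinite. -/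
theorem stmt_10 (R : Type*) [CommRing R] [IsLocalRing R]
    [Infinite (R ⧸ maximalIdeal R)] (k : ℕ)
    (hdim : 2 ≤ Module.rank (R ⧸ maximalIdeal R)
      ((↥(maximalIdeal R ^ k)) ⧸
        (maximalIdeal R • (⊤ : Submodule R ↥(maximalIdeal R ^ k))))) :
    {J : Ideal R | maximalIdeal R ^ (k + 1) ≤ J ∧ J ≤ maximalIdeal R ^ k}.Infinite ∧
      {J : Ideal R | J ≤ maximalIdeal R ^ k}.Infinite := by
  set m := maximalIdeal R
  have := Submodule.infinite_of_two_le_rank hdim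
  have : Infinite (Submodule R (↥(m ^ k) ⧸ m • (⊤ : Submodule R ↥(m ^ k)))) :=
    .of_injective _ (Submodule.restrictScalars_injective R (R ⧸ m) _)
  have hbetween := Submodule.infinite_Icc_map_subtype (m ^ k) (m • ⊤)
  rw [Submodule.map_subtype_smul_top, Ideal.smul_eq_mul, ← pow_succ'] at hbetween
  exact ⟨hbetween, hbetween.mono fun _ hJ ↦ hJ.2⟩
end

section
/- Let (R, m) be a commutative Artinian local ring with maximal ideal m whose residue field R/m is infinite, such that m⁴ = (0), m³ ≠ (0), the R/m-vector space Ann(m) has dimension 1, the R/m-vector space m/m² has dimension 2, and the R/m-vector space m²/m³ has dimension 1. Then infinitely many ideals of R are contained in Ann(m²); that is, the set 𝕀(Ann(m²)) is infinite. -/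
/-!
By Nakayama, `m² = (u)` is principal. Multiplication by `u` maps `m` into `m³ ⊆ Ann(m)` and
induces a linear map from the plane `m/m²` to the line `Ann(m)`, so it kills some `x ∈ m \ m²`.
Then `x` and `u` both annihilate `m² = (u)`, and the principal ideals `(x + c u)`, for `c`
running over representatives of the residue field, are pairwise distinct: if
`(x + c u) = (x + c' u)` with `c - c'` a unit, then `u = t (x + c u)`; a unit `t` puts `x` in
`(u) = m²`, while `t ∈ m` puts `u` in `m x`, whence `m³ = m u ⊆ m² x = u x R = 0`.
-/

open IsLocalRing Module

section

variable {R M N : Type*} [CommRing R] [IsLocalRing R]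
  [AddCommGroup M] [Module R M] [AddCommGroup N] [Module R N]

theorem IsLocalRing.exists_span_singleton_eq_top_of_finrank_eq_one [Module.Finite R M]
    (h : finrank (R ⧸ maximalIdeal R) (M ⧸ maximalIdeal R • (⊤ : Submodule R M)) = 1) :
    ∃ v : M, Submodule.span R {v} = ⊤ := by
  let _ := Ideal.Quotient.field (maximalIdeal R)
  obtain ⟨v', -, hv'⟩ := finrank_eq_one_iff'.mp h
  obtain ⟨v, rfl⟩ := Submodule.mkQ_surjective _ v'
  refine ⟨v, (map_mkQ_eq_top (R := R)).mp ?_⟩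
  rw [Submodule.map_span, Set.image_singleton, Submodule.eq_top_iff']
  intro w
  obtain ⟨c, rfl⟩ := hv' w
  obtain ⟨r, rfl⟩ := Ideal.Quotient.mk_surjective c
  exact Submodule.mem_span_singleton.mpr ⟨r, rfl⟩

theorem Submodule.exists_eq_span_singleton_of_finrank_eq_one {P : Submodule R M} (hP : P.FG)
    (h : finrank (R ⧸ maximalIdeal R) (P ⧸ maximalIdeal R • (⊤ : Submodule R P)) = 1) :
    ∃ u : M, P = Submodule.span R {u} := by
  have := Module.Finite.iff_fg.mpr hP
  obtain ⟨v, hv⟩ := exists_span_singleton_eq_top_of_finrank_eq_one h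
  refine ⟨v, ?_⟩
  conv_lhs => rw [← P.map_subtype_top, ← hv]
  rw [Submodule.map_span, Set.image_singleton, Submodule.subtype_apply]

theorem IsLocalRing.exists_notMem_smul_top_map_mem_smul_top_of_finrank_lt [Module.Finite R M]
    [Module.Finite R N] (f : M →ₗ[R] N)
    (h : finrank (R ⧸ maximalIdeal R) (N ⧸ maximalIdeal R • (⊤ : Submodule R N)) <
      finrank (R ⧸ maximalIdeal R) (M ⧸ maximalIdeal R • (⊤ : Submodule R M))) :
    ∃ z : M, z ∉ maximalIdeal R • (⊤ : Submodule R M) ∧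
      f z ∈ maximalIdeal R • (⊤ : Submodule R N) := by
  let _ := Ideal.Quotient.field (maximalIdeal R)
  have : FiniteDimensional (R ⧸ maximalIdeal R)
      (M ⧸ maximalIdeal R • (⊤ : Submodule R M)) := .of_restrictScalars_finite R _ _
  have : FiniteDimensional (R ⧸ maximalIdeal R)
      (N ⧸ maximalIdeal R • (⊤ : Submodule R N)) := .of_restrictScalars_finite R _ _
  let g := (Submodule.mapQ (maximalIdeal R • ⊤) (maximalIdeal R • ⊤) f
    (Submodule.smul_top_le_comap_smul_top _ f)).extendScalarsOfSurjective
      (S := R ⧸ maximalIdeal R) Ideal.Quotient.mk_surjective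
  obtain ⟨v, hv, hv0⟩ :=
    Submodule.exists_mem_ne_zero_of_ne_bot (LinearMap.ker_ne_bot_of_finrank_lt (f := g) h)
  obtain ⟨z, rfl⟩ := Submodule.mkQ_surjective _ v
  exact ⟨z, by simpa using hv0, by simpa [g] using hv⟩

end

section

variable {R : Type*} [CommRing R] [IsLocalRing R]

theorem IsLocalRing.sub_mem_maximalIdeal_of_span_add_mul_eq {x u : R} (hx : x ∉ Ideal.span {u})
    (hu : u ∉ maximalIdeal R * Ideal.span {x}) {c c' : R}
    (h : Ideal.span {x + c * u} = Ideal.span {x + c' * u}) : c - c' ∈ maximalIdeal R := by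
  by_contra hc
  have hcu : (c - c') * u ∈ Ideal.span {x + c * u} := by
    have := sub_mem (Ideal.mem_span_singleton_self (x + c * u))
      (h ▸ Ideal.mem_span_singleton_self (x + c' * u))
    convert this using 1; ring
  obtain ⟨t, ht⟩ := Ideal.mem_span_singleton'.mp
    ((Ideal.unit_mul_mem_iff_mem _ (notMem_maximalIdeal.mp hc)).mp hcu)
  by_cases htm : t ∈ maximalIdeal R
  · have hunit : IsUnit (1 - t * c) := isUnit_one_sub_self_of_mem_nonunits _
      ((mem_maximalIdeal _).mp (Ideal.mul_mem_right c _ htm))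
    refine hu ((Ideal.unit_mul_mem_iff_mem _ hunit).mp ?_)
    have : (1 - t * c) * u = t * x := by linear_combination -ht
    rw [this]
    exact Ideal.mul_mem_mul htm (Ideal.mem_span_singleton_self x)
  · refine hx ((Ideal.unit_mul_mem_iff_mem _ (notMem_maximalIdeal.mp htm)).mp ?_)
    have : t * x = (1 - t * c) * u := by linear_combination ht
    rw [this]
    exact Ideal.mul_mem_left _ _ (Ideal.mem_span_singleton_self u)

theorem IsLocalRing.infinite_setOf_ideal_le [Infinite (R ⧸ maximalIdeal R)] {J : Ideal R}
    {x u : R} (hxJ : x ∈ J) (huJ : u ∈ J) (hx : x ∉ Ideal.span {u})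
    (hu : u ∉ maximalIdeal R * Ideal.span {x}) : {I : Ideal R | I ≤ J}.Infinite := by
  refine Set.infinite_of_injective_forall_mem
    (f := fun q : R ⧸ maximalIdeal R => Ideal.span {x + q.out * u})
    (fun q q' h => ?_) (fun q => ?_)
  · rw [← Quotient.out_eq' q, ← Quotient.out_eq' q']
    exact Ideal.Quotient.eq.mpr (sub_mem_maximalIdeal_of_span_add_mul_eq hx hu h)
  · exact (Ideal.span_singleton_le_iff_mem J).mpr (J.add_mem hxJ (J.mul_mem_left _ huJ))

end

/-- Let (R, m) be a commutative Artinian local ring with infinite residue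
field, m⁴ = (0), m³ ≠ (0), v.dim_{R/m} Ann(m) = 1, v.dim_{R/m} (m/m²) = 2 and
v.dim_{R/m} (m²/m³) = 1.  Then infinitely many ideals of R are contained in Ann(m²). -/
theorem stmt_11 (R : Type*) [CommRing R] [IsArtinianRing R] [IsLocalRing R]
    [Infinite (R ⧸ maximalIdeal R)]
    (h4 : maximalIdeal R ^ 4 = ⊥) (h3 : maximalIdeal R ^ 3 ≠ ⊥)
    (hdimann : Module.finrank (R ⧸ maximalIdeal R)
      ((↥(Submodule.colon (⊥ : Ideal R) (maximalIdeal R))) ⧸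
        (maximalIdeal R •
          (⊤ : Submodule R ↥(Submodule.colon (⊥ : Ideal R) (maximalIdeal R))))) = 1)
    (hdim1 : Module.finrank (R ⧸ maximalIdeal R)
      ((↥(maximalIdeal R)) ⧸
        (maximalIdeal R • (⊤ : Submodule R ↥(maximalIdeal R)))) = 2)
    (hdim2 : Module.finrank (R ⧸ maximalIdeal R)
      ((↥(maximalIdeal R ^ 2)) ⧸
        (maximalIdeal R • (⊤ : Submodule R ↥(maximalIdeal R ^ 2)))) = 1) :
    {I : Ideal R | I ≤ Submodule.colon (⊥ : Ideal R) ((maximalIdeal R ^ 2 : Ideal R) : Set R)}.Infinite := by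
  set m := maximalIdeal R
  obtain ⟨u, hu : m ^ 2 = Ideal.span {u}⟩ :=
    Submodule.exists_eq_span_singleton_of_finrank_eq_one (IsNoetherian.noetherian (m ^ 2)) hdim2
  have hm3 : m * m ^ 2 ≤ Submodule.colon ⊥ (m : Set R) := by
    rw [Submodule.bot_colon, Submodule.le_annihilator_iff, Ideal.smul_eq_mul, ← h4]
    ring
  obtain ⟨⟨x, hxm⟩, hxm2, hxu⟩ := exists_notMem_smul_top_map_mem_smul_top_of_finrank_lt
    ((LinearMap.mulRight R u).restrict (p := m) (q := Submodule.colon ⊥ (m : Set R))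
      fun z hz => hm3 (Ideal.mul_mem_mul hz (hu ▸ Submodule.mem_span_singleton_self u)))
    (by rw [hdimann, hdim1]; norm_num)
  rw [Submodule.mem_smul_top_iff] at hxm2 hxu
  replace hxu : x * u = 0 := by
    have h : x * u ∈ m * Submodule.colon ⊥ (m : Set R) := hxu
    rwa [Submodule.bot_colon, Submodule.mul_annihilator, Ideal.mem_bot] at h
  have hx : x ∉ Ideal.span {u} := fun h => hxm2 (by rw [Ideal.smul_eq_mul, ← sq, hu]; exact h)
  have hux : u ∉ m * Ideal.span {x} := fun h => h3 <| le_bot_iff.mp <|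
    calc m ^ 3 = m * Ideal.span {u} := by rw [← hu]; ring
      _ ≤ m * (m * Ideal.span {x}) :=
        Ideal.mul_mono_right ((Ideal.span_singleton_le_iff_mem _).mpr h)
      _ = Ideal.span {u} * Ideal.span {x} := by rw [← hu]; ring
      _ = ⊥ := by
        rw [Ideal.span_singleton_mul_span_singleton, mul_comm, hxu, Ideal.span_singleton_eq_bot]
  refine infinite_setOf_ideal_le ?_ ?_ hx hux
  · rw [Submodule.bot_colon, hu]
    exact (Submodule.mem_annihilator_span_singleton u x).mpr hxu
  · rw [Submodule.bot_colon]
    refine Submodule.le_annihilator_iff.mpr ?_ (Ideal.mem_span_singleton_self u)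
    rw [Ideal.smul_eq_mul, ← hu, ← h4]
    ring
end

section
/- Let (R, m) be a commutative Artinian local ring with maximal ideal m such that m⁴ = (0), m³ ≠ (0), the R/m-vector space Ann(m) has dimension 1, and the R/m-vector space m²/m³ has dimension 1. Then for every x ∈ m \ m², either m² ⊆ Rx or m² ⊆ Ann(x). -/
/-!
If `x ∈ m` multiplies `m` into `m³`, then `m² x ⊆ m · m³ = m⁴ = 0`. Otherwise some `x t` with
`t ∈ m` lies in `m² \ m³`; since `m²/m³` is one-dimensional, `m² ⊆ (x t) + m · m²`, and
Nakayama's lemma for the nilpotent ideal `m` (here `m² · m² = 0`) gives `m² ⊆ (x t) ⊆ (x)`.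
-/

open IsLocalRing

namespace Submodule

variable {R M : Type*} [CommRing R] [AddCommGroup M] [Module R M]

theorem le_of_le_sup_smul_of_pow_smul_eq_bot {I : Ideal R} {N N' : Submodule R M} {n : ℕ}
    (hN : N ≤ N' ⊔ I • N) (hI : I ^ n • N = ⊥) : N ≤ N' := by
  have hpow : ∀ k : ℕ, N ≤ N' ⊔ I ^ k • N := by
    intro k
    induction k with
    | zero => simp
    | succ k ih =>
      calc N ≤ N' ⊔ I ^ k • N := ih
        _ ≤ N' ⊔ I ^ k • (N' ⊔ I • N) := sup_le_sup_left (smul_mono_right _ hN) _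
        _ = N' ⊔ I ^ k • N' ⊔ I ^ (k + 1) • N := by
          rw [smul_sup, pow_succ, mul_smul, sup_assoc]
        _ ≤ N' ⊔ I ^ (k + 1) • N := sup_le_sup_right (sup_le le_rfl smul_le_right) _
  simpa [hI] using hpow n

end Submodule

namespace IsLocalRing

variable {R M : Type*} [CommRing R] [IsLocalRing R] [AddCommGroup M] [Module R M]

theorem le_span_singleton_sup_smul_of_finrank_eq_one {N : Submodule R M}
    (hN : Module.finrank (R ⧸ maximalIdeal R)
      (N ⧸ maximalIdeal R • (⊤ : Submodule R N)) = 1)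
    {z : M} (hz : z ∈ N) (hz' : z ∉ maximalIdeal R • N) :
    N ≤ (R ∙ z) ⊔ maximalIdeal R • N := by
  let := Ideal.Quotient.field (maximalIdeal R)
  intro w hw
  have hz0 :
      Submodule.Quotient.mk (p := maximalIdeal R • (⊤ : Submodule R N)) ⟨z, hz⟩ ≠ 0 := by
    rwa [Ne, Submodule.Quotient.mk_eq_zero, Submodule.mem_smul_top_iff]
  obtain ⟨c, hc⟩ := (finrank_eq_one_iff_of_nonzero' _ hz0).mp hN (Submodule.Quotient.mk ⟨w, hw⟩)
  obtain ⟨r, rfl⟩ := Ideal.Quotient.mk_surjective c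
  have hwz : w - r • z ∈ maximalIdeal R • N := by
    have hc' : Submodule.Quotient.mk (r • (⟨z, hz⟩ : N)) = Submodule.Quotient.mk ⟨w, hw⟩ := hc
    rw [Submodule.Quotient.eq, Submodule.mem_smul_top_iff] at hc'
    simpa using (maximalIdeal R • N).neg_mem hc'
  rw [← add_sub_cancel (r • z) w]
  exact Submodule.add_mem_sup (Submodule.mem_span_singleton.mpr ⟨r, rfl⟩) hwz

end IsLocalRing

theorem stmt_12_general (R : Type*) [CommRing R] [IsLocalRing R]
    (h4 : maximalIdeal R ^ 4 = ⊥)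
    (hdim2 : Module.finrank (R ⧸ maximalIdeal R)
      ((↥(maximalIdeal R ^ 2)) ⧸
        (maximalIdeal R • (⊤ : Submodule R ↥(maximalIdeal R ^ 2)))) = 1) :
    ∀ x ∈ maximalIdeal R, x ∉ maximalIdeal R ^ 2 →
      maximalIdeal R ^ 2 ≤ Ideal.span {x} ∨ ∀ a ∈ maximalIdeal R ^ 2, a * x = 0 := by
  set m := maximalIdeal R
  intro x hx _
  have hm3 : m • m ^ 2 = m ^ 3 := by rw [Ideal.smul_eq_mul, ← pow_succ']
  by_cases hxm : ∀ t ∈ m, x * t ∈ m ^ 3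
  · right
    intro a ha
    have hkill : m ^ 2 * Ideal.span {x} = ⊥ := by
      refine le_bot_iff.mp ?_
      calc m ^ 2 * Ideal.span {x} = m * (Ideal.span {x} * m) := by ring
        _ ≤ m * m ^ 3 := Ideal.mul_mono_right (Ideal.span_singleton_mul_le_iff.mpr hxm)
        _ = ⊥ := by rw [← pow_succ', h4]
    simpa [hkill] using Ideal.mul_mem_mul ha (Ideal.mem_span_singleton_self x)
  · left
    push Not at hxm
    obtain ⟨t, ht, hxt⟩ := hxm
    have hxt2 : x * t ∈ m ^ 2 := pow_two m ▸ Ideal.mul_mem_mul hx ht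
    have hspan := le_span_singleton_sup_smul_of_finrank_eq_one hdim2 hxt2 (hm3 ▸ hxt)
    refine Submodule.le_of_le_sup_smul_of_pow_smul_eq_bot (I := m) (n := 2) ?_ ?_
    · exact hspan.trans (sup_le_sup_right
        (Ideal.span_singleton_le_span_singleton.mpr ⟨t, rfl⟩) _)
    · rw [Ideal.smul_eq_mul, ← pow_add, h4]

/-- Let (R, m) be a commutative Artinian local ring with m⁴ = (0),
m³ ≠ (0), v.dim_{R/m} Ann(m) = 1 and v.dim_{R/m} (m²/m³) = 1.  Then for every
x ∈ m \ m², either m² ⊆ Rx or m² ⊆ Ann(x). -/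
theorem stmt_12 (R : Type*) [CommRing R] [IsArtinianRing R] [IsLocalRing R]
    (h4 : maximalIdeal R ^ 4 = ⊥) (h3 : maximalIdeal R ^ 3 ≠ ⊥)
    (hdimann : Module.finrank (R ⧸ maximalIdeal R)
      ((↥(Submodule.colon (⊥ : Ideal R) (maximalIdeal R))) ⧸
        (maximalIdeal R •
          (⊤ : Submodule R ↥(Submodule.colon (⊥ : Ideal R) (maximalIdeal R))))) = 1)
    (hdim2 : Module.finrank (R ⧸ maximalIdeal R)
      ((↥(maximalIdeal R ^ 2)) ⧸
        (maximalIdeal R • (⊤ : Submodule R ↥(maximalIdeal R ^ 2)))) = 1) :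
    ∀ x ∈ maximalIdeal R, x ∉ maximalIdeal R ^ 2 →
      maximalIdeal R ^ 2 ≤ Ideal.span {x} ∨ ∀ a ∈ maximalIdeal R ^ 2, a * x = 0 :=
  stmt_12_general R h4 hdim2
end
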